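/- arXiv:1208.6032 — 7 statements merged into one kernel-verified Lean document; each statement's English description precedes it below -/
import Mathlib

section
/- Let R be a commutative ring, I ⊆ R an ideal, g ∈ R, and X an indeterminate over R. Then X·g is a zerodivisor on R[X]/I·R[X] if and only if g is a zerodivisor on R/I. -/
/-!
Being a zerodivisor means lying outside the submonoid of non-zero-divisors, which ring
isomorphisms preserve. Under `R[X]/I·R[X] ≃ (R/I)[X]` the class of `X·g` becomes `X·ḡ`; since `X`
is a non-zero-divisor and `C` reflects non-zero-divisors, `X·ḡ` is one iff `ḡ` is.
-/

open Polynomial nonZeroDivisors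

theorem notMem_nonZeroDivisors_iff_exists_mul_eq_zero {M₀ : Type*} [CommMonoidWithZero M₀]
    {r : M₀} : r ∉ M₀⁰ ↔ ∃ s, s ≠ 0 ∧ r * s = 0 := by
  simp [notMem_nonZeroDivisors_iff_left, Set.nonempty_def, and_comm]

theorem MulEquivClass.map_mem_nonZeroDivisors_iff {M₀ S F : Type*} [MonoidWithZero M₀]
    [MonoidWithZero S] [EquivLike F M₀ S] [MulEquivClass F M₀ S] (e : F) {x : M₀} :
    e x ∈ S⁰ ↔ x ∈ M₀⁰ := by
  rw [← MulEquivClass.map_nonZeroDivisors e]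
  exact Submonoid.mem_map_iff_mem (EquivLike.injective e)

namespace Polynomial

variable {R : Type*} [CommSemiring R] {a : R}

theorem C_mem_nonZeroDivisors_iff : C a ∈ R[X]⁰ ↔ a ∈ R⁰ := by
  rw [Polynomial.mem_nonZeroDivisors_iff, mem_nonZeroDivisors_iff_right]
  simp only [smul_C, smul_eq_mul, C_eq_zero]

theorem X_mul_C_mem_nonZeroDivisors_iff : X * C a ∈ R[X]⁰ ↔ a ∈ R⁰ := by
  rw [mul_mem_nonZeroDivisors, C_mem_nonZeroDivisors_iff, and_iff_right X_mem_nonzeroDivisors]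

end Polynomial

/-- `X·g` is a zerodivisor on `R[X]/I·R[X]` iff `g` is a zerodivisor on `R/I`. -/
theorem xg_zerodivisor_iff {R : Type*} [CommRing R] (I : Ideal R) (g : R) :
    (∃ h : Polynomial R ⧸ I.map (Polynomial.C : R →+* Polynomial R), h ≠ 0 ∧
      Ideal.Quotient.mk (I.map (Polynomial.C : R →+* Polynomial R))
        (Polynomial.X * Polynomial.C g) * h = 0) ↔
    (∃ r : R ⧸ I, r ≠ 0 ∧ Ideal.Quotient.mk I g * r = 0) := by
  simp only [← notMem_nonZeroDivisors_iff_exists_mul_eq_zero, not_iff_not]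
  rw [← MulEquivClass.map_mem_nonZeroDivisors_iff
      I.polynomialQuotientEquivQuotientPolynomial.symm,
    Ideal.polynomialQuotientEquivQuotientPolynomial_symm_mk, Polynomial.map_mul, map_X, map_C,
    X_mul_C_mem_nonZeroDivisors_iff]
end

section
/- Let f_0,…,f_m be monomials of the same degree d in k[x_0,…,x_n] satisfying the canonical restrictions (no common variable divides all of them, and every variable occurs in some f_j). Let f̂_j = x^α/f_j be the Newton complementary dual monomials, where α_i = max_j (exponent of x_i in f_j). Then the identity map on the polynomial ring k[y_0,…,y_m] induces a k-algebra isomorphism k[f_0,…,f_m] ≅ k[f̂_0,…,f̂_m] (sending f_j to f̂_j). -/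
/-!
Both evaluation maps send `y^u` to a monomial, `x^(A u)` resp. `x^(B u)`, where `A`, `B` are the
additive exponent maps `u ↦ ∑ u_j a_j` and `u ↦ ∑ u_j (α - a_j)`. Hence each kernel is determined
by the fibres of its exponent map, and it suffices that `A u` and `B u` determine each other. They
do: `A u + B u = |u| α`, while `|A u| = d |u|` and `|B u| = (|α| - d) |u|` with `d` and `|α| - d`
both positive, so either one determines `|u|` and with it the other.
-/

open MvPolynomial

namespace Finsupp

variable {σ τ : Type*}

theorem linearCombination_add_linearCombination_of_add_eq {A B : σ → τ →₀ ℕ} {C : τ →₀ ℕ}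
    (h : ∀ j, A j + B j = C) (u : σ →₀ ℕ) :
    linearCombination ℕ A u + linearCombination ℕ B u = u.degree • C := by
  induction u using Finsupp.induction_linear with
  | zero => simp
  | add u v hu hv =>
    simp only [map_add, add_smul, ← hu, ← hv]
    abel
  | single j c => simp [linearCombination_single, ← smul_add, h]

theorem degree_linearCombination_of_degree_eq {A : σ → τ →₀ ℕ} {d : ℕ}
    (h : ∀ j, (A j).degree = d) (u : σ →₀ ℕ) :
    (linearCombination ℕ A u).degree = u.degree * d := by
  induction u using Finsupp.induction_linear with
  | zero => simp
  | add u v hu hv => simp only [map_add, hu, hv, add_mul]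
  | single j c => simp [linearCombination_single, h]

theorem factorsThrough_linearCombination {A B : σ → τ →₀ ℕ} {C : τ →₀ ℕ} {d : ℕ}
    (hAB : ∀ j, A j + B j = C) (hA : ∀ j, (A j).degree = d) (hd : d ≠ 0) :
    Function.FactorsThrough (linearCombination ℕ B) (linearCombination ℕ A) := by
  intro u v huv
  have hdeg : u.degree = v.degree := by
    have := congrArg degree huv
    rw [degree_linearCombination_of_degree_eq hA, degree_linearCombination_of_degree_eq hA] at this
    exact mul_right_cancel₀ hd this
  have := linearCombination_add_linearCombination_of_add_eq hAB u
  rw [hdeg, ← linearCombination_add_linearCombination_of_add_eq hAB v, huv] at this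
  exact add_left_cancel this

end Finsupp

namespace AddMonoidAlgebra

theorem ker_mapDomainAlgHom_le {k A M N O : Type*} [CommSemiring k] [Semiring A] [Algebra k A]
    [AddMonoid M] [AddMonoid N] [AddMonoid O] (g : M →+ N) (g' : M →+ O)
    (h : Function.FactorsThrough g' g) :
    RingHom.ker (mapDomainAlgHom k A g) ≤ RingHom.ker (mapDomainAlgHom k A g') := by
  intro p hp
  rw [RingHom.mem_ker, mapDomainAlgHom_apply] at hp ⊢
  obtain ⟨T, hT⟩ : ∃ T : N → O, T ∘ g = g' :=
    ⟨Function.extend g g' 0, _root_.funext (h.extend_apply 0)⟩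
  have : mapDomain T (mapDomain g p) = mapDomain g' p := by
    rw [← hT]
    exact congrArg ofCoeff Finsupp.mapDomain_comp.symm
  rw [← this, hp, mapDomain_zero]

end AddMonoidAlgebra

theorem MvPolynomial.aeval_eq_mapDomainAlgHom {k σ τ : Type*} [CommSemiring k]
    (D : (σ →₀ ℕ) →+ (τ →₀ ℕ)) (f : σ → MvPolynomial τ k)
    (hf : ∀ j, f j = monomial (D (Finsupp.single j 1)) 1) :
    aeval f = AddMonoidAlgebra.mapDomainAlgHom k k D := by
  refine MvPolynomial.algHom_ext fun j => ?_
  rw [aeval_X, hf j, X, ← single_eq_monomial, ← single_eq_monomial,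
    AddMonoidAlgebra.mapDomainAlgHom_apply, AddMonoidAlgebra.mapDomain_single]

/-- for monomials `f_j` of common degree `d` satisfying the canonical
restrictions, with Newton complementary duals `f̂_j = x^α/f_j`, the identity map of
`k[y_0,…,y_m]` induces a `k`-algebra isomorphism `k[f] ≅ k[f̂]`; equivalently, the kernels of
the evaluation maps `y_j ↦ f_j` and `y_j ↦ f̂_j` coincide. -/
theorem dual_monomials_same_kernel
    {k : Type*} [Field k] {n m d : ℕ}
    (a : Fin (m + 1) → Fin (n + 1) → ℕ)
    (hdeg : ∀ j, ∑ i, a j i = d)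
    (hnofix : ∀ i, ∃ j, a j i = 0)
    (hall : ∀ i, ∃ j, a j i ≠ 0)
    (α : Fin (n + 1) → ℕ) (hα : ∀ i, α i = Finset.univ.sup fun j => a j i)
    (f fhat : Fin (m + 1) → MvPolynomial (Fin (n + 1)) k)
    (hf : ∀ j, f j = monomial (Finsupp.equivFunOnFinite.symm (a j)) (1 : k))
    (hfhat : ∀ j, fhat j =
      monomial (Finsupp.equivFunOnFinite.symm fun i => α i - a j i) (1 : k)) :
    RingHom.ker (MvPolynomial.aeval f :
        MvPolynomial (Fin (m + 1)) k →ₐ[k] MvPolynomial (Fin (n + 1)) k) =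
      RingHom.ker (MvPolynomial.aeval fhat :
        MvPolynomial (Fin (m + 1)) k →ₐ[k] MvPolynomial (Fin (n + 1)) k) := by
  let A (j : Fin (m + 1)) : Fin (n + 1) →₀ ℕ := Finsupp.equivFunOnFinite.symm (a j)
  let B (j : Fin (m + 1)) : Fin (n + 1) →₀ ℕ :=
    Finsupp.equivFunOnFinite.symm fun i => α i - a j i
  let C : Fin (n + 1) →₀ ℕ := Finsupp.equivFunOnFinite.symm α
  have hle (j i) : a j i ≤ α i := hα i ▸ Finset.le_sup (f := fun j => a j i) (Finset.mem_univ j)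
  have hAB (j) : A j + B j = C := by ext i; simp [A, B, C, hle j i]
  have hA (j) : (A j).degree = d := by rw [Finsupp.degree_eq_sum]; exact hdeg j
  have hB (j) : (B j).degree = C.degree - d := by rw [← hAB j, map_add, hA]; omega
  obtain ⟨j₀, hj₀⟩ := hnofix 0
  obtain ⟨j₁, hj₁⟩ := hall 0
  have hd : d ≠ 0 :=
    hA j₁ ▸ (Finsupp.degree_eq_zero_iff _).not.mpr (Finsupp.ne_iff.mpr ⟨0, hj₁⟩)
  have hdB : C.degree - d ≠ 0 := by
    rw [← hB j₀, Ne, Finsupp.degree_eq_zero_iff]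
    intro h
    have hα₀ : α 0 - a j₀ 0 = 0 := DFunLike.congr_fun h 0
    have := hle j₁ 0
    omega
  rw [aeval_eq_mapDomainAlgHom (Finsupp.linearCombination ℕ A).toAddMonoidHom f
      (by simp [hf, A, Finsupp.linearCombination_single]),
    aeval_eq_mapDomainAlgHom (Finsupp.linearCombination ℕ B).toAddMonoidHom fhat
      (by simp [hfhat, B, Finsupp.linearCombination_single])]
  exact le_antisymm
    (AddMonoidAlgebra.ker_mapDomainAlgHom_le _ _
      (Finsupp.factorsThrough_linearCombination hAB hA hd))
    (AddMonoidAlgebra.ker_mapDomainAlgHom_le _ _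
      (Finsupp.factorsThrough_linearCombination (fun j => (add_comm _ _).trans (hAB j)) hB hdB))
end

section
/- Let k be a field, R = k[x_0,…,x_{n-1}], and f_0,…,f_{m-1} ∈ R forms of degree d whose generated subfield satisfies k(f_0,…,f_{m-1}) = k(x_0^d, x_1/x_0, …, x_{n-1}/x_0) in k(x_0,…,x_{n-1}). Let g = g_{d-1}·x_n + g_d ∈ R[x_n] where g_{d-1}, g_d ∈ R are forms of degrees d−1 and d respectively with g_{d-1} ≠ 0. Then k(f_0,…,f_{m-1}, g) = k(x_0^d, x_1/x_0, …, x_{n-1}/x_0, x_n/x_0) inside k(x_0,…,x_n); in particular the rational map defined by (f_0,…,f_{m-1}, g) is birational onto its image. -/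
open MvPolynomial IntermediateField

/-- The rational function field `k(x_0,…,x_n)`. -/
abbrev RatFuncField (k : Type*) [Field k] (n : ℕ) : Type _ :=
  FractionRing (MvPolynomial (Fin (n + 1)) k)

/-- A polynomial in `x_0,…,x_n` viewed inside `k(x_0,…,x_n)`. -/
noncomputable def toF {k : Type*} [Field k] {n : ℕ} (p : MvPolynomial (Fin (n + 1)) k) :
    RatFuncField k n :=
  algebraMap (MvPolynomial (Fin (n + 1)) k) (RatFuncField k n) p

/-- The variable `x_i` viewed inside `k(x_0,…,x_n)`. -/
noncomputable def xv {k : Type*} [Field k] {n : ℕ} (i : Fin (n + 1)) : RatFuncField k n :=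
  toF (X i)

/-!
Write `c = x_0`, `v_i = x_i / x_0` and `t = x_n / x_0`. A form `p` of degree `e` in
`x_0,…,x_{n-1}` equals `c ^ e * p(v)`, so with `K = k(c^d, v_1,…,v_{n-1})`, which is
`k(f_0,…,f_{m-1})` by hypothesis, the monoid becomes
`g = c^{d-1} g_{d-1}(v) x_n + c^d g_d(v) = (c^d g_{d-1}(v)) t + c^d g_d(v)`,
an affine expression in `t` with coefficients in `K` and nonzero leading coefficient.
Hence adjoining `g` to `K` is the same as adjoining `t`.
-/

theorem MvPolynomial.IsHomogeneous.aeval_const_mul {σ R S : Type*} [CommSemiring R]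
    [CommSemiring S] [Algebra R S] {p : MvPolynomial σ R} {e : ℕ} (hp : p.IsHomogeneous e)
    (c : S) (v : σ → S) :
    MvPolynomial.aeval (fun i => c * v i) p = c ^ e * MvPolynomial.aeval v p := by
  rw [aeval_def, aeval_def, eval₂_eq, eval₂_eq, Finset.mul_sum]
  refine Finset.sum_congr rfl fun s hs => ?_
  have hdeg : ∑ i ∈ s.support, s i = e := by
    simpa [Finsupp.weight_apply, Finsupp.sum] using hp (mem_support_iff.mp hs)
  rw [← hdeg]
  simp_rw [mul_pow, Finset.prod_mul_distrib, Finset.prod_pow_eq_pow_sum]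
  ring

theorem IntermediateField.aeval_mem {k F σ : Type*} [Field k] [Field F] [Algebra k F]
    (K : IntermediateField k F) {v : σ → F} (hv : ∀ i, v i ∈ K) (p : MvPolynomial σ k) :
    aeval v p ∈ K :=
  eval₂_mem (fun _ _ => K.algebraMap_mem _) hv

theorem IntermediateField.sup_adjoin_simple_mul_add {k F : Type*} [Field k] [Field F]
    [Algebra k F] (K : IntermediateField k F) {a b : F} (ha : a ∈ K) (hb : b ∈ K) (ha0 : a ≠ 0)
    (t : F) : K ⊔ k⟮a * t + b⟯ = K ⊔ k⟮t⟯ := by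
  apply le_antisymm <;> refine sup_le le_sup_left (adjoin_simple_le_iff.mpr ?_)
  · have hK : K ≤ K ⊔ k⟮t⟯ := le_sup_left
    have ht : t ∈ K ⊔ k⟮t⟯ := (le_sup_right : k⟮t⟯ ≤ _) (mem_adjoin_simple_self k t)
    exact add_mem (mul_mem (hK ha) ht) (hK hb)
  · have hK : K ≤ K ⊔ k⟮a * t + b⟯ := le_sup_left
    have hat : a * t + b ∈ K ⊔ k⟮a * t + b⟯ :=
      (le_sup_right : k⟮a * t + b⟯ ≤ _) (mem_adjoin_simple_self k _)
    have h : (a * t + b - b) / a ∈ K ⊔ k⟮a * t + b⟯ := div_mem (sub_mem hat (hK hb)) (hK ha)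
    rwa [add_sub_cancel_right, mul_div_cancel_left₀ _ ha0] at h

section RationalFunctionField

variable {k : Type*} [Field k] {n : ℕ}

theorem toF_injective : Function.Injective (toF (k := k) (n := n)) :=
  IsFractionRing.injective _ _

theorem xv_ne_zero (i : Fin (n + 1)) : (xv i : RatFuncField k n) ≠ 0 := fun h =>
  X_ne_zero (R := k) i (toF_injective (h.trans (map_zero _).symm))

theorem toF_rename_castSucc (p : MvPolynomial (Fin n) k) :
    toF (rename Fin.castSucc p : MvPolynomial (Fin (n + 1)) k) =
      aeval (fun i : Fin n => xv i.castSucc) p := by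
  have h : (IsScalarTower.toAlgHom k (MvPolynomial (Fin (n + 1)) k) (RatFuncField k n)).comp
      (rename Fin.castSucc) = aeval fun i : Fin n => xv i.castSucc :=
    algHom_ext fun i => by simp [xv, toF]
  exact DFunLike.congr_fun h p

theorem toF_rename_castSucc_of_isHomogeneous {p : MvPolynomial (Fin n) k} {e : ℕ}
    (hp : p.IsHomogeneous e) :
    toF (rename Fin.castSucc p : MvPolynomial (Fin (n + 1)) k) =
      xv 0 ^ e * aeval (fun i : Fin n => xv i.castSucc / xv 0) p := by
  have hc : (xv 0 : RatFuncField k n) ≠ 0 := xv_ne_zero 0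
  simp only [toF_rename_castSucc, ← hp.aeval_const_mul, mul_div_cancel₀ _ hc]

theorem aeval_ratios_ne_zero {p : MvPolynomial (Fin n) k} {e : ℕ} (hp : p.IsHomogeneous e)
    (hp0 : p ≠ 0) : aeval (fun i : Fin n => (xv i.castSucc / xv 0 : RatFuncField k n)) p ≠ 0 := by
  intro h
  have h' : toF (rename Fin.castSucc p : MvPolynomial (Fin (n + 1)) k) = toF 0 := by
    rw [toF_rename_castSucc_of_isHomogeneous hp, h, mul_zero, toF, map_zero]
  exact hp0 (rename_injective _ (Fin.castSucc_injective n) (by simpa using toF_injective h'))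

theorem toF_monoid {d : ℕ} (hd : 1 ≤ d) {g1 g0 : MvPolynomial (Fin n) k}
    (hg1 : g1.IsHomogeneous (d - 1)) (hg0 : g0.IsHomogeneous d) :
    toF (rename Fin.castSucc g1 * X (Fin.last n) + rename Fin.castSucc g0) =
      xv 0 ^ d * aeval (fun i : Fin n => xv i.castSucc / xv 0) g1 * (xv (Fin.last n) / xv 0) +
        xv 0 ^ d * aeval (fun i : Fin n => xv i.castSucc / xv 0) g0 := by
  have hc : (xv 0 : RatFuncField k n) ≠ 0 := xv_ne_zero 0
  have hcd : (xv 0 : RatFuncField k n) ^ d = xv 0 ^ (d - 1) * xv 0 := by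
    rw [← pow_succ, Nat.sub_add_cancel hd]
  have hG : toF (rename Fin.castSucc g1 * X (Fin.last n) + rename Fin.castSucc g0) =
      toF (rename Fin.castSucc g1 : MvPolynomial (Fin (n + 1)) k) * xv (Fin.last n) +
        toF (rename Fin.castSucc g0 : MvPolynomial (Fin (n + 1)) k) := by
    simp only [toF, xv, map_add, map_mul]
  rw [hG, toF_rename_castSucc_of_isHomogeneous hg1, toF_rename_castSucc_of_isHomogeneous hg0, hcd]
  field_simp

theorem castSucc_ratio_mem_adjoin (d : ℕ) (i : Fin n) :
    (xv i.castSucc / xv 0 : RatFuncField k n) ∈ adjoin k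
      (insert (xv 0 ^ d) {y | ∃ i : Fin n, i.castSucc ≠ 0 ∧ y = xv i.castSucc / xv 0}) := by
  by_cases hi : (i.castSucc : Fin (n + 1)) = 0
  · rw [hi, div_self (xv_ne_zero 0)]
    exact one_mem _
  · exact subset_adjoin _ _ (Set.mem_insert_of_mem _ ⟨i, hi, rfl⟩)

theorem insert_ratios_eq_union_last (hn : 1 ≤ n) (d : ℕ) :
    insert (xv 0 ^ d) {y : RatFuncField k n | ∃ i : Fin (n + 1), i ≠ 0 ∧ y = xv i / xv 0} =
      insert (xv 0 ^ d) {y | ∃ i : Fin n, i.castSucc ≠ 0 ∧ y = xv i.castSucc / xv 0} ∪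
        {xv (Fin.last n) / xv 0} := by
  have hlast : (Fin.last n : Fin (n + 1)) ≠ 0 := Fin.pos_iff_ne_zero.mp hn
  ext y
  simp only [Set.mem_union, Set.mem_insert_iff, Set.mem_ofPred_eq, Set.mem_singleton_iff]
  constructor
  · rintro (h | ⟨i, hi, rfl⟩)
    · exact Or.inl (Or.inl h)
    · rcases Fin.eq_castSucc_or_eq_last i with ⟨j, rfl⟩ | rfl
      · exact Or.inl (Or.inr ⟨j, hi, rfl⟩)
      · exact Or.inr rfl
  · rintro ((h | ⟨i, hi, rfl⟩) | rfl)
    · exact Or.inl h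
    · exact Or.inr ⟨_, hi, rfl⟩
    · exact Or.inr ⟨_, hlast, rfl⟩

end RationalFunctionField

theorem monoid_extension_birational_general
    {k : Type*} [Field k] {n m d : ℕ} (hn : 1 ≤ n) (hd : 1 ≤ d)
    (f : Fin m → MvPolynomial (Fin n) k)
    (hbir : IntermediateField.adjoin k
        (Set.range fun j => toF (rename Fin.castSucc (f j) : MvPolynomial (Fin (n + 1)) k)) =
      IntermediateField.adjoin k
        (insert ((xv 0 : RatFuncField k n) ^ d)
          {y : RatFuncField k n | ∃ i : Fin n, i.castSucc ≠ 0 ∧ y = xv i.castSucc / xv 0}))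
    (g1 g0 : MvPolynomial (Fin n) k)
    (hg1 : g1.IsHomogeneous (d - 1)) (hg1ne : g1 ≠ 0) (hg0 : g0.IsHomogeneous d) :
    IntermediateField.adjoin k
        ((Set.range fun j => toF (rename Fin.castSucc (f j) : MvPolynomial (Fin (n + 1)) k)) ∪
          {toF ((rename Fin.castSucc g1) * X (Fin.last n) + rename Fin.castSucc g0)}) =
      IntermediateField.adjoin k
        (insert ((xv 0 : RatFuncField k n) ^ d)
          {y : RatFuncField k n | ∃ i : Fin (n + 1), i ≠ 0 ∧ y = xv i / xv 0}) := by
  set K := adjoin k (insert ((xv 0 : RatFuncField k n) ^ d)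
    {y : RatFuncField k n | ∃ i : Fin n, i.castSucc ≠ 0 ∧ y = xv i.castSucc / xv 0})
  have hv : ∀ i : Fin n, xv i.castSucc / xv 0 ∈ K := castSucc_ratio_mem_adjoin d
  have hc : xv 0 ^ d ∈ K := subset_adjoin _ _ (Set.mem_insert _ _)
  rw [adjoin_union, hbir, toF_monoid hd hg1 hg0, insert_ratios_eq_union_last hn, adjoin_union]
  exact K.sup_adjoin_simple_mul_add (mul_mem hc (K.aeval_mem hv g1))
    (mul_mem hc (K.aeval_mem hv g0))
    (mul_ne_zero (pow_ne_zero _ (xv_ne_zero 0)) (aeval_ratios_ne_zero hg1 hg1ne)) _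

/-- if forms `f_0,…,f_{m-1}` of degree `d` in `k[x_0,…,x_{n-1}]` define a
birational map onto the image, and `g = g_{d-1}·x_n + g_d` is an `x_n`-monoid with
`g_{d-1} ≠ 0` homogeneous of degree `d−1` and `g_d` homogeneous of degree `d`, then
`k(f_0,…,f_{m-1},g) = k(x_0^d, x_1/x_0, …, x_n/x_0)`, i.e. the map defined by
`(f_0,…,f_{m-1},g)` is birational onto its image. -/
theorem monoid_extension_birational
    {k : Type*} [Field k] {n m d : ℕ} (hn : 1 ≤ n) (hd : 1 ≤ d)
    (f : Fin m → MvPolynomial (Fin n) k)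
    (hf : ∀ j, (f j).IsHomogeneous d)
    (hbir : IntermediateField.adjoin k
        (Set.range fun j => toF (rename Fin.castSucc (f j) : MvPolynomial (Fin (n + 1)) k)) =
      IntermediateField.adjoin k
        (insert ((xv 0 : RatFuncField k n) ^ d)
          {y : RatFuncField k n | ∃ i : Fin n, i.castSucc ≠ 0 ∧ y = xv i.castSucc / xv 0}))
    (g1 g0 : MvPolynomial (Fin n) k)
    (hg1 : g1.IsHomogeneous (d - 1)) (hg1ne : g1 ≠ 0) (hg0 : g0.IsHomogeneous d) :
    IntermediateField.adjoin k
        ((Set.range fun j => toF (rename Fin.castSucc (f j) : MvPolynomial (Fin (n + 1)) k)) ∪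
          {toF ((rename Fin.castSucc g1) * X (Fin.last n) + rename Fin.castSucc g0)}) =
      IntermediateField.adjoin k
        (insert ((xv 0 : RatFuncField k n) ^ d)
          {y : RatFuncField k n | ∃ i : Fin (n + 1), i ≠ 0 ∧ y = xv i / xv 0}) :=
  monoid_extension_birational_general hn hd f hbir g1 g0 hg1 hg1ne hg0
end

section
/- Let A = (a_{ij}) and B = (b_{ij}) be (n+1)×(n+1) matrices of natural numbers (log-matrices of monomial Cremona maps and inverse) such that A·B = Γ + Id, where Γ is the matrix all of whose columns equal a fixed vector γ ∈ ℕ^{n+1}. Assume every row of A and every row of B contains a zero entry. Let α_i = max_j a_{ij}, β_i = max_j b_{ij}, Â = (α_i − a_{ij}), B̂ = (β_i − b_{ij}). Then Â·B̂ = Γ̂ + Id, where Γ̂ is the matrix all of whose columns equal the vector γ̂ with γ̂_i = γ_i + α_i·(Σ_l β_l − d') − Σ_l a_{il}β_l, and d' is the common column sum of B. -/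
/-- let `A, B` be `(n+1)×(n+1)` matrices of natural numbers with constant
column sums `d` and `d'` respectively, every row containing a zero, satisfying
`A·B = Γ + Id` where all columns of `Γ` equal `γ`. Then the Newton complementary duals
satisfy `Â·B̂ = Γ̂ + Id` where `γ̂_i = γ_i + α_i(Σ_l β_l − d') − Σ_l a_{il} β_l`, and the
entries `γ̂_i` are nonnegative. -/
theorem dual_log_matrices_inverse_identity {n : ℕ}
    (A B : Matrix (Fin (n + 1)) (Fin (n + 1)) ℕ)
    (d d' : ℕ)
    (hA : ∀ j, ∑ i, A i j = d) (hB : ∀ j, ∑ i, B i j = d')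
    (hA0 : ∀ i, ∃ j, A i j = 0) (hB0 : ∀ i, ∃ j, B i j = 0)
    (γ : Fin (n + 1) → ℕ)
    (hAB : ∀ i j, ∑ l, A i l * B l j = γ i + if i = j then 1 else 0)
    (α β : Fin (n + 1) → ℕ)
    (hα : ∀ i, α i = Finset.univ.sup (A i)) (hβ : ∀ i, β i = Finset.univ.sup (B i))
    (γhat : Fin (n + 1) → ℤ)
    (hγhat : ∀ i, γhat i =
      (γ i : ℤ) + (α i : ℤ) * ((∑ l, (β l : ℤ)) - (d' : ℤ)) - ∑ l, (A i l : ℤ) * (β l : ℤ)) :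
    (∀ i j, ∑ l, ((α i : ℤ) - (A i l : ℤ)) * ((β l : ℤ) - (B l j : ℤ)) =
        γhat i + if i = j then 1 else 0) ∧
      (∀ i, 0 ≤ γhat i) := by

  have key : ∀ i j, ∑ l, ((α i : ℤ) - (A i l : ℤ)) * ((β l : ℤ) - (B l j : ℤ)) =
      γhat i + if i = j then 1 else 0 := by
    intro i j
    have hBj : (∑ l, (B l j : ℤ)) = (d' : ℤ) := by
      rw [← Nat.cast_sum, hB j]
    have hABij : (∑ l, (A i l : ℤ) * (B l j : ℤ)) =
        (γ i : ℤ) + if i = j then 1 else 0 := by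
      have := hAB i j
      have h2 : ((∑ l, A i l * B l j : ℕ) : ℤ) = ((γ i + if i = j then 1 else 0 : ℕ) : ℤ) := by
        exact_mod_cast congrArg (Nat.cast : ℕ → ℤ) this
      push_cast at h2
      simpa using h2
    calc ∑ l, ((α i : ℤ) - (A i l : ℤ)) * ((β l : ℤ) - (B l j : ℤ))
        = ∑ l, ((α i : ℤ) * (β l : ℤ) - (α i : ℤ) * (B l j : ℤ)
            - (A i l : ℤ) * (β l : ℤ) + (A i l : ℤ) * (B l j : ℤ)) := by
          apply Finset.sum_congr rfl; intros; ring
      _ = (α i : ℤ) * (∑ l, (β l : ℤ)) - (α i : ℤ) * (∑ l, (B l j : ℤ))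
            - (∑ l, (A i l : ℤ) * (β l : ℤ)) + ∑ l, (A i l : ℤ) * (B l j : ℤ) := by
          rw [Finset.sum_add_distrib, Finset.sum_sub_distrib, Finset.sum_sub_distrib,
            ← Finset.mul_sum, ← Finset.mul_sum]
      _ = γhat i + if i = j then 1 else 0 := by
          rw [hBj, hABij, hγhat i]; ring
  refine ⟨key, ?_⟩
  have hterm : ∀ i j l, (0 : ℤ) ≤ ((α i : ℤ) - (A i l : ℤ)) * ((β l : ℤ) - (B l j : ℤ)) := by
    intro i j l
    have h1 : A i l ≤ α i := by rw [hα i]; exact Finset.le_sup (Finset.mem_univ l)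
    have h2 : B l j ≤ β l := by rw [hβ l]; exact Finset.le_sup (Finset.mem_univ j)
    have h1' : (A i l : ℤ) ≤ (α i : ℤ) := by exact_mod_cast h1
    have h2' : (B l j : ℤ) ≤ (β l : ℤ) := by exact_mod_cast h2
    exact mul_nonneg (by linarith) (by linarith)
  intro i
  obtain rfl | hn := Nat.eq_zero_or_pos n
  · -- contradiction from the zero row of A
    obtain ⟨j0, hj0⟩ := hA0 i
    have hi : i = 0 := Fin.fin_one_eq_zero i
    have hj : j0 = 0 := Fin.fin_one_eq_zero j0
    have h := hAB i i
    simp [Fin.sum_univ_succ, hi] at h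
    rw [hi] at hj0; rw [hj] at hj0
    rw [hj0] at h
    omega
  · have : Nontrivial (Fin (n + 1)) := Fin.nontrivial_iff_two_le.mpr (by omega)
    obtain ⟨j, hj⟩ := exists_ne i
    have h := key i j
    rw [if_neg (fun h' => hj h'.symm)] at h
    simp only [add_zero] at h
    rw [← h]
    exact Finset.sum_nonneg fun l _ => hterm i j l
end

section
/- For every n ≥ 2 and every d ≥ 1, the monomials x_0^d, x_0^{d-1}x_1, x_1^{d-1}x_2 in k[x_0,x_1,x_2] define a birational map of P^2 to itself of degree d, i.e., k(x_0^d, x_0^{d-1}x_1, x_1^{d-1}x_2) = k(x_0^d, x_1/x_0, x_2/x_0) within k(x_0,x_1,x_2). -/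
open MvPolynomial

/-- The rational function field `k(x_0,x_1,x_2)`. -/
abbrev RatFuncField3 (k : Type*) [Field k] : Type _ :=
  FractionRing (MvPolynomial (Fin 3) k)

/-- The variable `x_i` viewed inside `k(x_0,x_1,x_2)`. -/
noncomputable def xv3 {k : Type*} [Field k] (i : Fin 3) : RatFuncField3 k :=
  algebraMap (MvPolynomial (Fin 3) k) (RatFuncField3 k) (X i)

/-- for every `n ≥ 2` and `d ≥ 1`, the monomials
`x_0^d, x_0^{d-1}x_1, x_1^{d-1}x_2` define a birational (Cremona) map of `P^2`, i.e.
`k(x_0^d, x_0^{d-1}x_1, x_1^{d-1}x_2) = k(x_0^d, x_1/x_0, x_2/x_0)`. -/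
theorem plane_monomial_cremona {k : Type*} [Field k] (n d : ℕ) (hn : 2 ≤ n) (hd : 1 ≤ d) :
    IntermediateField.adjoin k
        ({xv3 0 ^ d, xv3 0 ^ (d - 1) * xv3 1, xv3 1 ^ (d - 1) * xv3 2} :
          Set (RatFuncField3 k)) =
      IntermediateField.adjoin k
        ({xv3 0 ^ d, xv3 1 / xv3 0, xv3 2 / xv3 0} : Set (RatFuncField3 k)) := by
  have hd' : d - 1 + 1 = d := Nat.succ_pred_eq_of_pos hd
  have hx : ∀ i : Fin 3, (xv3 i : RatFuncField3 k) ≠ 0 := by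
    intro i
    simp only [xv3]
    rw [map_ne_zero_iff _
      (IsFractionRing.injective (MvPolynomial (Fin 3) k) (RatFuncField3 k))]
    exact MvPolynomial.X_ne_zero i
  have hx0 : (xv3 0 : RatFuncField3 k) ≠ 0 := hx 0
  have hx1 : (xv3 1 : RatFuncField3 k) ≠ 0 := hx 1
  have hpow : (xv3 0 : RatFuncField3 k) ^ d = xv3 0 ^ (d - 1) * xv3 0 := by
    conv_lhs => rw [← hd']
    rw [pow_succ]
  set F := IntermediateField.adjoin k
      ({xv3 0 ^ d, xv3 0 ^ (d - 1) * xv3 1, xv3 1 ^ (d - 1) * xv3 2} :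
        Set (RatFuncField3 k)) with hF
  set G := IntermediateField.adjoin k
      ({xv3 0 ^ d, xv3 1 / xv3 0, xv3 2 / xv3 0} : Set (RatFuncField3 k)) with hG
  have haF : (xv3 0 : RatFuncField3 k) ^ d ∈ F :=
    IntermediateField.subset_adjoin k _ (by simp)
  have hbF : (xv3 0 : RatFuncField3 k) ^ (d - 1) * xv3 1 ∈ F :=
    IntermediateField.subset_adjoin k _ (by simp)
  have hcF : (xv3 1 : RatFuncField3 k) ^ (d - 1) * xv3 2 ∈ F :=
    IntermediateField.subset_adjoin k _ (by simp)
  have haG : (xv3 0 : RatFuncField3 k) ^ d ∈ G :=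
    IntermediateField.subset_adjoin k _ (by simp)
  have huG : (xv3 1 : RatFuncField3 k) / xv3 0 ∈ G :=
    IntermediateField.subset_adjoin k _ (by simp)
  have hvG : (xv3 2 : RatFuncField3 k) / xv3 0 ∈ G :=
    IntermediateField.subset_adjoin k _ (by simp)
  -- x1/x0 ∈ F
  have huF : (xv3 1 : RatFuncField3 k) / xv3 0 ∈ F := by
    have h : (xv3 1 : RatFuncField3 k) / xv3 0 =
        (xv3 0 ^ (d - 1) * xv3 1) / xv3 0 ^ d := by
      rw [hpow]; field_simp
    rw [h]
    exact div_mem hbF haF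
  -- x2/x0 ∈ F
  have hvF : (xv3 2 : RatFuncField3 k) / xv3 0 ∈ F := by
    have h : (xv3 2 : RatFuncField3 k) / xv3 0 =
        (xv3 1 ^ (d - 1) * xv3 2) / (xv3 0 ^ d * (xv3 1 / xv3 0) ^ (d - 1)) := by
      rw [hpow, div_pow]; field_simp
    rw [h]
    exact div_mem hcF (mul_mem haF (pow_mem huF _))
  apply le_antisymm
  · rw [IntermediateField.adjoin_le_iff]
    rintro y hy
    simp only [Set.mem_insert_iff, Set.mem_singleton_iff] at hy
    rcases hy with h | h | h
    · exact h ▸ haG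
    · have : (xv3 0 : RatFuncField3 k) ^ (d - 1) * xv3 1 =
          xv3 0 ^ d * (xv3 1 / xv3 0) := by
        rw [hpow]; field_simp
      exact h ▸ this ▸ mul_mem haG huG
    · have : (xv3 1 : RatFuncField3 k) ^ (d - 1) * xv3 2 =
          xv3 0 ^ d * (xv3 1 / xv3 0) ^ (d - 1) * (xv3 2 / xv3 0) := by
        rw [hpow, div_pow]; field_simp
      exact h ▸ this ▸ mul_mem (mul_mem haG (pow_mem huG _)) hvG
  · rw [IntermediateField.adjoin_le_iff]
    rintro y hy
    simp only [Set.mem_insert_iff, Set.mem_singleton_iff] at hy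
    rcases hy with h | h | h
    · exact h ▸ haF
    · exact h ▸ huF
    · exact h ▸ hvF
end

section
/- Let f_0,…,f_m ∈ k[x_0,…,x_n] be arbitrary nonzero forms of the same degree d satisfying the canonical restrictions, with Newton complementary dual forms f̂_0,…,f̂_m (obtained by replacing each monomial M occurring in some f_j by x^α/M, keeping coefficients, where α_i is the maximum exponent of x_i over all monomials of all f_j). If k(f_0,…,f_m) = k(x_0^d, x_1/x_0,…,x_n/x_0), then k(f̂_0,…,f̂_m) = k(x_0^{|α|−d}, x_1/x_0,…,x_n/x_0). -/
open MvPolynomial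

set_option synthInstance.maxHeartbeats 1000000
set_option maxHeartbeats 2000000

/-- The directrix vector of a tuple of polynomials: `α_i` is the maximum exponent of `x_i`
over all monomials occurring in any of the polynomials. -/
noncomputable def alphaVec {k : Type*} [Field k] {n m : ℕ}
    (f : Fin m → MvPolynomial (Fin n) k) (i : Fin n) : ℕ :=
  Finset.univ.sup fun j => (f j).support.sup fun s => s i

/-- The Newton complementary dual of a form with respect to a vector `α`: replace each
monomial `x^s` (keeping its coefficient) by `x^{α−s}`. -/
noncomputable def dualForm {k : Type*} [Field k] {n : ℕ} (α : Fin n → ℕ)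
    (f : MvPolynomial (Fin n) k) : MvPolynomial (Fin n) k :=
  ∑ s ∈ f.support, monomial (Finsupp.equivFunOnFinite.symm fun i => α i - s i) (f.coeff s)

/-- The Newton complementary dual of a tuple of forms. -/
noncomputable def dualTuple {k : Type*} [Field k] {n m : ℕ}
    (f : Fin m → MvPolynomial (Fin n) k) : Fin m → MvPolynomial (Fin n) k :=
  fun j => dualForm (alphaVec f) (f j)

namespace Scratch

variable {k : Type*} [Field k] {n : ℕ}

lemma toF_injective : Function.Injective (toF (k := k) (n := n)) :=
  IsFractionRing.injective _ _

lemma toF_ne_zero {p : MvPolynomial (Fin (n+1)) k} (hp : p ≠ 0) : toF p ≠ 0 :=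
  fun h => hp (toF_injective (h.trans (map_zero _).symm))

lemma xv_ne_zero (i : Fin (n+1)) : (xv i : RatFuncField k n) ≠ 0 :=
  toF_ne_zero (X_ne_zero i)

lemma toF_zero : toF (0 : MvPolynomial (Fin (n+1)) k) = 0 := map_zero _

lemma toF_mul (p q : MvPolynomial (Fin (n+1)) k) : toF (p * q) = toF p * toF q :=
  map_mul (algebraMap _ _) _ _

lemma toF_pow (p : MvPolynomial (Fin (n+1)) k) (e : ℕ) : toF (p ^ e) = toF p ^ e :=
  map_pow (algebraMap _ _) _ _

lemma toF_monomial (t : Fin (n+1) →₀ ℕ) (a : k) :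
    toF (monomial t a) = algebraMap k (RatFuncField k n) a * ∏ i, xv i ^ t i := by
  rw [toF, monomial_eq, Finsupp.prod_pow, map_mul, map_prod]
  simp only [map_pow]
  rw [IsScalarTower.algebraMap_apply k (MvPolynomial (Fin (n+1)) k) (RatFuncField k n),
    MvPolynomial.algebraMap_eq]
  rfl

/-- substitution `x_i ↦ x_i⁻¹`. -/
noncomputable def phi : MvPolynomial (Fin (n+1)) k →ₐ[k] RatFuncField k n :=
  aeval fun i => (xv i)⁻¹

lemma phi_X (i : Fin (n+1)) : (phi (X i) : RatFuncField k n) = (xv i)⁻¹ := by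
  simp [phi]

lemma phi_mul (p q : MvPolynomial (Fin (n+1)) k) : phi (p * q) = phi p * phi q :=
  map_mul phi p q

lemma phi_pow (p : MvPolynomial (Fin (n+1)) k) (e : ℕ) : phi (p ^ e) = phi p ^ e :=
  map_pow phi p e

lemma phi_monomial (t : Fin (n+1) →₀ ℕ) (a : k) :
    (phi (monomial t a) : RatFuncField k n)
      = algebraMap k (RatFuncField k n) a * ∏ i, ((xv i)⁻¹) ^ t i := by
  rw [phi, aeval_monomial, Finsupp.prod_pow]

lemma toF_sum {ι : Type*} (s : Finset ι) (g : ι → MvPolynomial (Fin (n+1)) k) :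
    toF (∑ x ∈ s, g x) = ∑ x ∈ s, toF (g x) :=
  map_sum (algebraMap (MvPolynomial (Fin (n+1)) k) (RatFuncField k n)) _ _

lemma toF_dualForm (α : Fin (n+1) → ℕ) (p : MvPolynomial (Fin (n+1)) k)
    (hle : ∀ s ∈ p.support, ∀ i, s i ≤ α i) :
    toF (dualForm α p) = (∏ i, (xv i : RatFuncField k n) ^ α i) * phi p := by
  conv_rhs => rw [← p.support_sum_monomial_coeff]
  rw [dualForm, toF_sum, map_sum, Finset.mul_sum]
  refine Finset.sum_congr rfl fun s hs => ?_
  rw [toF_monomial, phi_monomial]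
  have h1 : ∀ i : Fin (n+1),
      ((Finsupp.equivFunOnFinite.symm fun i => α i - s i) : Fin (n+1) →₀ ℕ) i = α i - s i :=
    fun i => rfl
  have h2 : ∀ i : Fin (n+1), (xv i : RatFuncField k n) ^ (α i - s i)
      = xv i ^ α i * ((xv i)⁻¹) ^ s i := fun i => by
    rw [inv_pow]; exact pow_sub₀ _ (xv_ne_zero i) (hle s hs i)
  simp only [h1, h2, Finset.prod_mul_distrib]
  ring

lemma coeff_dualForm (α : Fin (n+1) → ℕ) (p : MvPolynomial (Fin (n+1)) k)
    (hle : ∀ s ∈ p.support, ∀ i, s i ≤ α i) {s₀ : Fin (n+1) →₀ ℕ} (hs₀ : s₀ ∈ p.support) :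
    coeff (Finsupp.equivFunOnFinite.symm fun i => α i - s₀ i) (dualForm α p) = coeff s₀ p := by
  rw [dualForm, coeff_sum]
  rw [Finset.sum_eq_single s₀]
  · simp [coeff_monomial]
  · intro s hs hne
    rw [coeff_monomial, if_neg]
    intro h
    apply hne
    have h' : ∀ i, α i - s i = α i - s₀ i := fun i => congrFun (Finsupp.equivFunOnFinite.symm.injective h) i
    ext i
    have := h' i
    have h1 := hle s hs i
    have h2 := hle s₀ hs₀ i
    omega
  · intro h; exact absurd hs₀ h

lemma dualForm_ne_zero (α : Fin (n+1) → ℕ) {p : MvPolynomial (Fin (n+1)) k}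
    (hle : ∀ s ∈ p.support, ∀ i, s i ≤ α i) (hp : p ≠ 0) : dualForm α p ≠ 0 := by
  obtain ⟨s₀, hs₀⟩ := support_nonempty.mpr hp
  rw [ne_zero_iff]
  exact ⟨_, by rw [coeff_dualForm α p hle hs₀]; exact mem_support_iff.mp hs₀⟩

lemma phi_ne_zero {p : MvPolynomial (Fin (n+1)) k} (hp : p ≠ 0) :
    (phi p : RatFuncField k n) ≠ 0 := by
  set β : Fin (n+1) → ℕ := fun i => p.support.sup fun s => s i with hβ
  have hle : ∀ s ∈ p.support, ∀ i, s i ≤ β i := fun s hs i => Finset.le_sup (f := fun s => s i) hs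
  intro h
  have hA := toF_dualForm β p hle
  rw [h, mul_zero] at hA
  exact toF_ne_zero (dualForm_ne_zero β hle hp) hA

lemma degree_eq_sum {ι : Type*} [Fintype ι] (s : ι →₀ ℕ) : s.degree = ∑ i, s i :=
  Finset.sum_subset (Finset.subset_univ _) fun _ _ hi => Finsupp.notMem_support_iff.mp hi

lemma sum_eq_of_isHomogeneous {ι : Type*} [Fintype ι] {e : ℕ} {p : MvPolynomial ι k}
    (hp : p.IsHomogeneous e) {s : ι →₀ ℕ} (hs : s ∈ p.support) : ∑ i, s i = e := by
  have h1 : (Finsupp.weight 1) s = e := hp (mem_support_iff.mp hs)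
  rw [← degree_eq_sum]
  rw [Finsupp.degree_eq_weight_one]
  exact h1

lemma aeval_smul_homog {ι : Type*} [Fintype ι] {p : MvPolynomial ι k} {e : ℕ}
    (hp : p.IsHomogeneous e) (c : RatFuncField k n) (v : ι → RatFuncField k n) :
    aeval (fun j => c * v j) p = c ^ e * aeval v p := by
  conv_lhs => rw [← p.support_sum_monomial_coeff]
  conv_rhs => rw [← p.support_sum_monomial_coeff]
  rw [map_sum, map_sum, Finset.mul_sum]
  refine Finset.sum_congr rfl fun s hs => ?_
  rw [aeval_monomial, aeval_monomial, Finsupp.prod_pow, Finsupp.prod_pow]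
  simp only [mul_pow, Finset.prod_mul_distrib, Finset.prod_pow_eq_pow_sum]
  rw [sum_eq_of_isHomogeneous hp hs]
  ring

lemma prod_xv_pow (β : Fin (n+1) → ℕ) :
    (∏ i, (xv i : RatFuncField k n) ^ β i)
      = (xv 0 : RatFuncField k n) ^ (∑ i, β i) *
        ∏ i : Fin n, ((xv i.succ : RatFuncField k n) / xv 0) ^ β i.succ := by
  rw [Fin.prod_univ_succ, Fin.sum_univ_succ]
  simp only [div_pow, Finset.prod_div_distrib, Finset.prod_pow_eq_pow_sum, pow_add]
  rw [mul_assoc]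
  congr 1
  rw [← mul_div_assoc, mul_div_cancel_left₀]
  exact pow_ne_zero _ (xv_ne_zero 0)

lemma hc_mul_aeval {m d c e : ℕ} (hd : 0 < d) (f : Fin (m+1) → MvPolynomial (Fin (n+1)) k)
    (hf : ∀ j, (f j).IsHomogeneous d) (r : MvPolynomial (Fin (n+1)) k) (hr : r.IsHomogeneous c)
    (p : MvPolynomial (Fin (m+1)) k) :
    homogeneousComponent (c + d * e) (r * aeval f p)
      = r * aeval f (homogeneousComponent e p) := by
  conv_lhs => rw [← p.sum_homogeneousComponent]
  rw [map_sum, Finset.mul_sum, map_sum]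
  have step : ∀ e' ∈ Finset.range (p.totalDegree + 1),
      homogeneousComponent (c + d * e) (r * aeval f (homogeneousComponent e' p))
        = if e' = e then r * aeval f (homogeneousComponent e' p) else 0 := by
    intro e' _
    rw [homogeneousComponent_of_mem (by
      rw [mem_homogeneousSubmodule]
      exact hr.mul ((homogeneousComponent_isHomogeneous e' p).aeval f hf))]
    refine if_congr ?_ rfl rfl
    constructor
    · intro h; exact (Nat.eq_of_mul_eq_mul_left hd (Nat.add_left_cancel h)).symm
    · intro h; rw [h]
  rw [Finset.sum_congr rfl step, Finset.sum_ite_eq' (Finset.range (p.totalDegree + 1)) e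
      (fun e' => r * aeval f (homogeneousComponent e' p))]
  by_cases he : e ∈ Finset.range (p.totalDegree + 1)
  · rw [if_pos he]
  · rw [if_neg he, homogeneousComponent_eq_zero, map_zero, mul_zero]
    simp only [Finset.mem_range] at he
    omega

lemma aeval_toF {m : ℕ} (f : Fin (m+1) → MvPolynomial (Fin (n+1)) k)
    (p : MvPolynomial (Fin (m+1)) k) :
    aeval (fun j => toF (f j)) p = toF (aeval f p) := by
  have h := MvPolynomial.comp_aeval (f := f)
    (IsScalarTower.toAlgHom k (MvPolynomial (Fin (n+1)) k) (RatFuncField k n))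
  exact (AlgHom.congr_fun h p).symm

lemma aeval_phi {m : ℕ} (f : Fin (m+1) → MvPolynomial (Fin (n+1)) k)
    (p : MvPolynomial (Fin (m+1)) k) :
    aeval (fun j => phi (f j)) p = phi (aeval f p) :=
  (AlgHom.congr_fun (MvPolynomial.comp_aeval (f := f) phi) p).symm

end Scratch

/-- if forms `f_0,…,f_m` of degree `d` satisfying the canonical restrictions
define a birational map onto the image, i.e. `k(f_0,…,f_m) = k(x_0^d, x_1/x_0,…,x_n/x_0)`,
then their Newton complementary dual forms satisfy
`k(f̂_0,…,f̂_m) = k(x_0^{|α|−d}, x_1/x_0,…,x_n/x_0)`. -/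
theorem dual_forms_birational {k : Type*} [Field k] {n m d : ℕ}
    (f : Fin (m + 1) → MvPolynomial (Fin (n + 1)) k)
    (hne : ∀ j, f j ≠ 0)
    (hdeg : ∀ j, (f j).IsHomogeneous d)
    (hgcd : ∀ p : MvPolynomial (Fin (n + 1)) k, (∀ j, p ∣ f j) → IsUnit p)
    (hall : ∀ i, ∃ j, ∃ s ∈ (f j).support, s i ≠ 0)
    (hbir : IntermediateField.adjoin k (Set.range fun j => toF (f j)) =
      IntermediateField.adjoin k
        (insert ((xv 0 : RatFuncField k n) ^ d)
          (Set.range fun i : Fin n => (xv i.succ : RatFuncField k n) / xv 0))) :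
    IntermediateField.adjoin k (Set.range fun j => toF (dualTuple f j)) =
      IntermediateField.adjoin k
        (insert ((xv 0 : RatFuncField k n) ^ ((∑ i, alphaVec f i) - d))
          (Set.range fun i : Fin n => (xv i.succ : RatFuncField k n) / xv 0)) := by
  classical
  have hαle : ∀ j, ∀ s ∈ (f j).support, ∀ i, s i ≤ alphaVec f i := fun j s hs i =>
    le_trans (Finset.le_sup (f := fun s => s i) hs)
      (Finset.le_sup (f := fun j => (f j).support.sup fun s => s i) (Finset.mem_univ j))
  have hsupd : ∀ j, ∀ s ∈ (f j).support, ∑ i, s i = d := fun j s hs =>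
    Scratch.sum_eq_of_isHomogeneous (hdeg j) hs
  have hd1 : 0 < d := by
    obtain ⟨j, s, hs, hs0⟩ := hall 0
    have h := hsupd j s hs
    have h2 : s 0 ≤ ∑ i, s i :=
      Finset.single_le_sum (fun i _ => Nat.zero_le _) (Finset.mem_univ 0)
    omega
  have hdA : d ≤ ∑ i, alphaVec f i := by
    obtain ⟨s, hs⟩ := MvPolynomial.support_nonempty.mpr (hne 0)
    rw [← hsupd 0 s hs]
    exact Finset.sum_le_sum fun i _ => hαle 0 s hs i
  set ψ : Fin (m+1) → RatFuncField k n := fun j => toF (dualTuple f j) with hψdef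
  set Xα : RatFuncField k n := ∏ i, (xv i) ^ alphaVec f i with hXαdef
  have hXα_ne : Xα ≠ 0 :=
    Finset.prod_ne_zero_iff.mpr fun i _ => pow_ne_zero _ (Scratch.xv_ne_zero i)
  have hkey : ∀ j, ψ j = Xα * Scratch.phi (f j) := fun j =>
    Scratch.toF_dualForm _ _ (hαle j)
  have hmemL' : ∀ p : MvPolynomial (Fin (m+1)) k,
      aeval ψ p ∈ IntermediateField.adjoin k (Set.range ψ) := fun p => by
    apply IntermediateField.algebra_adjoin_le_adjoin
    rw [Algebra.adjoin_range_eq_range_aeval]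
    exact ⟨p, rfl⟩
  have hQhat : ∀ (e : ℕ) (Q : MvPolynomial (Fin (m+1)) k),
      aeval ψ (homogeneousComponent e Q)
        = Xα ^ e * Scratch.phi (aeval f (homogeneousComponent e Q)) := by
    intro e Q
    have h1 : aeval ψ (homogeneousComponent e Q)
        = aeval (fun j => Xα * Scratch.phi (f j)) (homogeneousComponent e Q) :=
      congrArg (fun v : Fin (m+1) → RatFuncField k n =>
        (aeval v) ((homogeneousComponent e) Q)) (funext hkey)
    rw [h1, Scratch.aeval_smul_homog (homogeneousComponent_isHomogeneous e Q),
      Scratch.aeval_phi]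
  -- Claim I : the ratios x_i / x_0 belong to the field generated by the dual forms
  have hratio : ∀ i : Fin n, ((xv i.succ : RatFuncField k n) / xv 0)
      ∈ IntermediateField.adjoin k (Set.range ψ) := by
    intro i
    have hmem : ((xv i.succ : RatFuncField k n) / xv 0)
        ∈ IntermediateField.adjoin k (Set.range fun j => toF (f j)) := by
      rw [hbir]
      exact IntermediateField.subset_adjoin _ _ (Set.mem_insert_of_mem _ ⟨i, rfl⟩)
    rw [IntermediateField.mem_adjoin_range_iff] at hmem
    obtain ⟨P, Q, hPQ⟩ := hmem
    rw [Scratch.aeval_toF, Scratch.aeval_toF] at hPQ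
    have hx_ne : ((xv i.succ : RatFuncField k n) / xv 0) ≠ 0 :=
      div_ne_zero (Scratch.xv_ne_zero _) (Scratch.xv_ne_zero 0)
    have hQ : aeval f Q ≠ 0 := by
      intro h
      rw [h, Scratch.toF_zero, div_zero] at hPQ
      exact hx_ne hPQ
    have hcross : (X i.succ : MvPolynomial (Fin (n+1)) k) * aeval f Q = X 0 * aeval f P := by
      apply Scratch.toF_injective
      rw [Scratch.toF_mul, Scratch.toF_mul]
      have hcc := (div_eq_div_iff (Scratch.xv_ne_zero 0) (Scratch.toF_ne_zero hQ)).mp hPQ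
      calc toF (X i.succ) * toF (aeval f Q)
          = xv i.succ * toF (aeval f Q) := rfl
        _ = toF (aeval f P) * xv 0 := hcc
        _ = toF (X 0) * toF (aeval f P) := by rw [mul_comm]; rfl
    have hQsum : aeval f Q
        = ∑ e ∈ Finset.range (Q.totalDegree + 1), aeval f (homogeneousComponent e Q) := by
      conv_lhs => rw [← Q.sum_homogeneousComponent]
      rw [map_sum]
    obtain ⟨e, -, hQe⟩ := Finset.exists_ne_zero_of_sum_ne_zero (by rw [← hQsum]; exact hQ)
    have hcomp : (X i.succ : MvPolynomial (Fin (n+1)) k) * aeval f (homogeneousComponent e Q)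
        = X 0 * aeval f (homogeneousComponent e P) := by
      have h1 := congrArg (homogeneousComponent (1 + d * e)) hcross
      rwa [Scratch.hc_mul_aeval hd1 f hdeg _ (isHomogeneous_X _ _),
        Scratch.hc_mul_aeval hd1 f hdeg _ (isHomogeneous_X _ _)] at h1
    have hPe : aeval f (homogeneousComponent e P) ≠ 0 := by
      intro h
      rw [h, mul_zero] at hcomp
      exact mul_ne_zero (X_ne_zero _) hQe hcomp
    have hphi := DFunLike.congr_arg Scratch.phi hcomp
    rw [Scratch.phi_mul, Scratch.phi_mul, Scratch.phi_X, Scratch.phi_X] at hphi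
    have hfinal : ((xv i.succ : RatFuncField k n) / xv 0)
        = aeval ψ (homogeneousComponent e Q) / aeval ψ (homogeneousComponent e P) := by
      rw [hQhat e Q, hQhat e P]
      rw [mul_div_mul_left _ _ (pow_ne_zero e hXα_ne)]
      rw [div_eq_div_iff (Scratch.xv_ne_zero 0) (Scratch.phi_ne_zero hPe)]
      have h0 := Scratch.xv_ne_zero (k := k) (n := n) 0
      have hs := Scratch.xv_ne_zero (k := k) (n := n) i.succ
      rw [inv_mul_eq_div, inv_mul_eq_div, div_eq_div_iff hs h0] at hphi
      linear_combination -hphi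
    rw [hfinal]
    exact div_mem (hmemL' _) (hmemL' _)
  -- Claim II : x_0 ^ (|α| - d) belongs to the field generated by the dual forms
  have hx0 : ((xv 0 : RatFuncField k n) ^ ((∑ i, alphaVec f i) - d))
      ∈ IntermediateField.adjoin k (Set.range ψ) := by
    have hmem : ((xv 0 : RatFuncField k n) ^ d)
        ∈ IntermediateField.adjoin k (Set.range fun j => toF (f j)) := by
      rw [hbir]
      exact IntermediateField.subset_adjoin _ _ (Set.mem_insert _ _)
    rw [IntermediateField.mem_adjoin_range_iff] at hmem
    obtain ⟨P, Q, hPQ⟩ := hmem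
    rw [Scratch.aeval_toF, Scratch.aeval_toF] at hPQ
    have hx_ne : ((xv 0 : RatFuncField k n) ^ d) ≠ 0 := pow_ne_zero _ (Scratch.xv_ne_zero 0)
    have hQ : aeval f Q ≠ 0 := by
      intro h
      rw [h, Scratch.toF_zero, div_zero] at hPQ
      exact hx_ne hPQ
    have hcross : (X 0 : MvPolynomial (Fin (n+1)) k) ^ d * aeval f Q = aeval f P := by
      apply Scratch.toF_injective
      rw [Scratch.toF_mul, Scratch.toF_pow]
      exact (eq_div_iff (Scratch.toF_ne_zero hQ)).mp hPQ
    have hQsum : aeval f Q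
        = ∑ e ∈ Finset.range (Q.totalDegree + 1), aeval f (homogeneousComponent e Q) := by
      conv_lhs => rw [← Q.sum_homogeneousComponent]
      rw [map_sum]
    obtain ⟨e, -, hQe⟩ := Finset.exists_ne_zero_of_sum_ne_zero (by rw [← hQsum]; exact hQ)
    have hcomp : (X 0 : MvPolynomial (Fin (n+1)) k) ^ d * aeval f (homogeneousComponent e Q)
        = aeval f (homogeneousComponent (e+1) P) := by
      have h1 := congrArg (homogeneousComponent (d + d * e)) hcross
      rw [Scratch.hc_mul_aeval hd1 f hdeg _ (isHomogeneous_X_pow _ _)] at h1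
      conv at h1 => rhs; rw [← one_mul (aeval f P)]
      have h2 : d + d * e = 0 + d * (e + 1) := by ring
      rw [h2, Scratch.hc_mul_aeval hd1 f hdeg 1 (isHomogeneous_one _ _), one_mul] at h1
      exact h1
    have hphi := DFunLike.congr_arg Scratch.phi hcomp
    rw [Scratch.phi_mul, Scratch.phi_pow, Scratch.phi_X, inv_pow] at hphi
    have hfinal : Xα / (xv 0 : RatFuncField k n) ^ d
        = aeval ψ (homogeneousComponent (e+1) P) / aeval ψ (homogeneousComponent e Q) := by
      rw [hQhat e Q, hQhat (e+1) P, ← hphi]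
      have hqne : Scratch.phi (aeval f (homogeneousComponent e Q)) ≠ 0 :=
        Scratch.phi_ne_zero hQe
      rw [pow_succ, mul_assoc, mul_div_mul_left _ _ (pow_ne_zero e hXα_ne), ← mul_assoc,
        mul_div_cancel_right₀ _ hqne, div_eq_mul_inv]
    have hXmem : Xα / (xv 0 : RatFuncField k n) ^ d
        ∈ IntermediateField.adjoin k (Set.range ψ) := by
      rw [hfinal]
      exact div_mem (hmemL' _) (hmemL' _)
    have hPr : (∏ i : Fin n, ((xv i.succ : RatFuncField k n) / xv 0) ^ alphaVec f i.succ) ≠ 0 :=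
      Finset.prod_ne_zero_iff.mpr fun i _ =>
        pow_ne_zero _ (div_ne_zero (Scratch.xv_ne_zero _) (Scratch.xv_ne_zero 0))
    have hsplit : ((xv 0 : RatFuncField k n) ^ ((∑ i, alphaVec f i) - d))
        = (Xα / (xv 0 : RatFuncField k n) ^ d) *
          ∏ i : Fin n, (((xv i.succ : RatFuncField k n) / xv 0) ^ alphaVec f i.succ)⁻¹ := by
      rw [hXαdef, Scratch.prod_xv_pow, pow_sub₀ _ (Scratch.xv_ne_zero 0) hdA]
      rw [Finset.prod_inv_distrib]
      have hc2 : (∏ i : Fin n, ((xv i.succ : RatFuncField k n) / xv 0) ^ alphaVec f i.succ) *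
          (∏ i : Fin n, ((xv i.succ : RatFuncField k n) / xv 0) ^ alphaVec f i.succ)⁻¹ = 1 :=
        mul_inv_cancel₀ hPr
      linear_combination (-((xv 0 : RatFuncField k n) ^ (∑ i, alphaVec f i) *
        ((xv 0 : RatFuncField k n) ^ d)⁻¹)) * hc2
    rw [hsplit]
    exact mul_mem hXmem (prod_mem fun i _ => inv_mem (pow_mem (hratio i) _))
  -- conclusion
  apply le_antisymm
  · rw [IntermediateField.adjoin_le_iff]
    rintro x ⟨j, rfl⟩
    show toF (dualTuple f j) ∈ _
    rw [show dualTuple f j = dualForm (alphaVec f) (f j) from rfl, dualForm, Scratch.toF_sum]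
    refine sum_mem fun s hs => ?_
    rw [Scratch.toF_monomial]
    refine mul_mem (IntermediateField.algebraMap_mem _ _) ?_
    have hβ : ∀ i : Fin (n+1),
        ((Finsupp.equivFunOnFinite.symm fun i => alphaVec f i - s i) : Fin (n+1) →₀ ℕ) i
          = alphaVec f i - s i := fun i => rfl
    simp only [hβ]
    rw [Scratch.prod_xv_pow]
    have hsum : (∑ i, (alphaVec f i - s i)) = (∑ i, alphaVec f i) - d := by
      rw [Finset.sum_tsub_distrib _ (fun i _ => hαle j s hs i), hsupd j s hs]
    rw [hsum]
    refine mul_mem (IntermediateField.subset_adjoin _ _ (Set.mem_insert _ _))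
      (prod_mem fun i _ => pow_mem
        (IntermediateField.subset_adjoin _ _ (Set.mem_insert_of_mem _ (Set.mem_range_self i))) _)
  · rw [IntermediateField.adjoin_le_iff]
    rintro x hx
    rcases Set.mem_insert_iff.mp hx with rfl | hx2
    · exact hx0
    · obtain ⟨i, rfl⟩ := hx2
      exact hratio i
end

section
/- Let f_0,…,f_m ∈ k[x_0,…,x_n] be forms of the same degree satisfying the canonical restrictions (gcd equal to 1 and every variable appearing in some f_j). Then the Newton complementary dual forms f̂_0,…,f̂_m also satisfy the canonical restrictions, and the Newton complementary dual of (f̂_0,…,f̂_m) equals (f_0,…,f_m). -/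
open MvPolynomial

/-! For `f` whose exponents are bounded by `α`, `dualForm α f` is `x^α f(x⁻¹)`, computed in the
fraction field; hence `dualForm α` is an involution on such forms and
`dualForm (α + β) (p q) = dualForm α p * dualForm β q`.

Since the `f_j` have no common factor, no variable `x_i` divides all of them: some monomial of some
`f_j` avoids `x_i`, and its dual has `x_i`-exponent `α_i`. So the dual tuple has the same vector
`α`, dualizing twice gives back `f`, and every `x_i` occurring in some `f_j` occurs in some `f̂_j`.
If `p` divides every `f̂_j`, multiplicativity makes the dual of `p` (with respect to its own degree
vector) divide every `f_j`, so it is a constant `c` and `p = c x^β`; as `α_i` is attained in some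
`f_j`, some `f̂_j` avoids `x_i`, which forces `β = 0`. -/

lemma MvPolynomial.X_dvd_iff_forall_mem_support {σ R : Type*} [CommSemiring R] {i : σ}
    {p : MvPolynomial σ R} : X i ∣ p ↔ ∀ s ∈ p.support, s i ≠ 0 := by
  simp only [X_dvd_iff_modMonomial_eq_zero, MvPolynomial.ext_iff, coeff_zero, mem_support_iff]
  refine forall_congr' fun s => ?_
  by_cases hs : s i = 0
  · have : ¬ Finsupp.single i 1 ≤ s := by simp [Finsupp.single_le_iff, hs]
    simp [coeff_modMonomial_of_not_le _ this, hs]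
  · have : Finsupp.single i 1 ≤ s := by simp [Finsupp.single_le_iff]; omega
    simp [coeff_modMonomial_of_le _ this, hs]

noncomputable def dualExp {N : ℕ} (α : Fin N → ℕ) (s : Fin N →₀ ℕ) : Fin N →₀ ℕ :=
  Finsupp.equivFunOnFinite.symm fun i => α i - s i

section

variable {N : ℕ} {α : Fin N → ℕ} {s : Fin N →₀ ℕ}

@[simp]
lemma dualExp_apply (i : Fin N) : dualExp α s i = α i - s i := rfl

lemma dualExp_dualExp (h : ∀ i, s i ≤ α i) : dualExp α (dualExp α s) = s := by
  ext i; simp [Nat.sub_sub_self (h i)]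

lemma dualExp_injOn : Set.InjOn (dualExp α) {s | ∀ i, s i ≤ α i} :=
  Set.LeftInvOn.injOn fun _ hs => dualExp_dualExp hs

end

section

variable {k : Type*} [Field k] {N : ℕ} {α β : Fin N → ℕ} {s : Fin N →₀ ℕ}
  {f g p q : MvPolynomial (Fin N) k}

lemma le_of_mem_support_of_degreeOf_le (hf : ∀ i, f.degreeOf i ≤ α i) (hs : s ∈ f.support)
    (i : Fin N) : s i ≤ α i :=
  (monomial_le_degreeOf i hs).trans (hf i)

lemma dualForm_eq_sum :
    dualForm α f = ∑ s ∈ f.support, monomial (dualExp α s) (coeff s f) := rfl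

lemma dualForm_monomial (a : k) : dualForm α (monomial s a) = monomial (dualExp α s) a := by
  classical
  by_cases ha : a = 0
  · simp [dualForm_eq_sum, ha]
  · simp [dualForm_eq_sum, support_monomial, ha]

lemma coeff_dualExp_dualForm (hf : ∀ i, f.degreeOf i ≤ α i) (hs : ∀ i, s i ≤ α i) :
    coeff (dualExp α s) (dualForm α f) = coeff s f := by
  classical
  rw [dualForm_eq_sum, coeff_sum, Finset.sum_eq_single s]
  · simp [coeff_monomial, dualExp]
  · intro t ht hts
    rw [coeff_monomial, if_neg]
    exact fun h => hts (dualExp_injOn (le_of_mem_support_of_degreeOf_le hf ht) hs h)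
  · intro hs
    simp [notMem_support_iff.1 hs]

lemma support_dualForm_subset :
    (dualForm α f).support ⊆ f.support.image (dualExp α) := by
  refine support_sum.trans fun t ht => ?_
  obtain ⟨s, hs, ht⟩ := Finset.mem_biUnion.1 ht
  exact Finset.mem_image.2 ⟨s, hs, (Finset.mem_singleton.1 (support_monomial_subset ht)).symm⟩

lemma support_dualForm (hf : ∀ i, f.degreeOf i ≤ α i) :
    (dualForm α f).support = f.support.image (dualExp α) := by
  refine support_dualForm_subset.antisymm fun t ht => ?_
  obtain ⟨s, hs, rfl⟩ := Finset.mem_image.1 ht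
  rw [mem_support_iff, coeff_dualExp_dualForm hf (le_of_mem_support_of_degreeOf_le hf hs)]
  exact mem_support_iff.1 hs

lemma dualForm_dualForm (hf : ∀ i, f.degreeOf i ≤ α i) : dualForm α (dualForm α f) = f := by
  classical
  have hb := fun s (hs : s ∈ f.support) => le_of_mem_support_of_degreeOf_le hf hs
  conv_lhs => rw [dualForm_eq_sum, support_dualForm hf]
  rw [Finset.sum_image fun s hs t ht h => dualExp_injOn (hb s hs) (hb t ht) h]
  conv_rhs => rw [f.as_sum]
  refine Finset.sum_congr rfl fun s hs => ?_
  rw [coeff_dualExp_dualForm hf (hb s hs), dualExp_dualExp (hb s hs)]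

lemma degreeOf_dualForm_le (i : Fin N) : (dualForm α f).degreeOf i ≤ α i := by
  classical
  refine degreeOf_le_iff.2 fun t ht => ?_
  obtain ⟨s, -, rfl⟩ := Finset.mem_image.1 (support_dualForm_subset ht)
  exact Nat.sub_le _ _

local notation "K" => FractionRing (MvPolynomial (Fin N) k)

noncomputable def evalInvX : MvPolynomial (Fin N) k →+* K :=
  eval₂Hom ((algebraMap (MvPolynomial (Fin N) k) K).comp C)
    fun i => (algebraMap _ K (X i : MvPolynomial (Fin N) k))⁻¹

lemma algebraMap_dualForm (hf : ∀ i, f.degreeOf i ≤ α i) :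
    algebraMap _ K (dualForm α f) =
      algebraMap _ K (∏ i, X i ^ α i : MvPolynomial (Fin N) k) * evalInvX f := by
  have hX (i : Fin N) : algebraMap _ K (X i : MvPolynomial (Fin N) k) ≠ 0 :=
    (map_ne_zero_iff _ (IsFractionRing.injective _ _)).2 (X_ne_zero i)
  conv_rhs => rw [f.as_sum]
  rw [dualForm_eq_sum, map_sum, map_sum, Finset.mul_sum]
  refine Finset.sum_congr rfl fun s hs => ?_
  rw [evalInvX, eval₂Hom_monomial, monomial_eq, Finsupp.prod_fintype _ _ fun i => pow_zero _,
    Finsupp.prod_fintype _ _ fun i => pow_zero _]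
  simp only [map_mul, map_prod, map_pow, RingHom.coe_comp, Function.comp_apply, dualExp_apply,
    inv_pow]
  rw [mul_left_comm, ← Finset.prod_mul_distrib]
  congr 1
  refine Finset.prod_congr rfl fun i _ => ?_
  rw [pow_sub₀ _ (hX i) (le_of_mem_support_of_degreeOf_le hf hs i)]

lemma dualForm_mul (hp : ∀ i, p.degreeOf i ≤ α i) (hq : ∀ i, q.degreeOf i ≤ β i) :
    dualForm (α + β) (p * q) = dualForm α p * dualForm β q := by
  have hpq (i : Fin N) : (p * q).degreeOf i ≤ (α + β) i :=
    (degreeOf_mul_le i p q).trans (add_le_add (hp i) (hq i))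
  apply IsFractionRing.injective (MvPolynomial (Fin N) k) K
  rw [map_mul, algebraMap_dualForm hpq, algebraMap_dualForm hp, algebraMap_dualForm hq, map_mul]
  simp only [Pi.add_apply, pow_add, Finset.prod_mul_distrib, map_mul]
  ring

lemma degreeOf_dualForm_of_not_X_dvd (hf : ∀ i, f.degreeOf i ≤ α i) {i : Fin N}
    (h : ¬ X i ∣ f) : (dualForm α f).degreeOf i = α i := by
  obtain ⟨s, hs, hsi⟩ : ∃ s ∈ f.support, s i = 0 := by
    simpa [X_dvd_iff_forall_mem_support] using h
  have hmem : dualExp α s ∈ (dualForm α f).support := by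
    rw [support_dualForm hf]; exact Finset.mem_image_of_mem _ hs
  refine (degreeOf_dualForm_le i).antisymm ?_
  simpa [hsi] using monomial_le_degreeOf i hmem

lemma not_X_dvd_dualForm_of_degreeOf_eq (hf0 : f ≠ 0) (hf : ∀ i, f.degreeOf i ≤ α i)
    {i : Fin N} (h : f.degreeOf i = α i) : ¬ X i ∣ dualForm α f := by
  obtain ⟨s, hs, hsi⟩ := Finset.exists_mem_eq_sup f.support (support_nonempty.2 hf0) (· i)
  have hmem : dualExp α s ∈ (dualForm α f).support := by
    rw [support_dualForm hf]; exact Finset.mem_image_of_mem _ hs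
  rw [X_dvd_iff_forall_mem_support]
  intro hdvd
  exact hdvd _ hmem (by rw [dualExp_apply, ← hsi, ← degreeOf_eq_sup, h, Nat.sub_self])

lemma dualForm_degreeOf_dvd_dualForm (hg : ∀ i, g.degreeOf i ≤ α i) (hpg : p ∣ g) :
    dualForm (fun i => p.degreeOf i) p ∣ dualForm α g := by
  obtain ⟨q, rfl⟩ := hpg
  rcases eq_or_ne p 0 with rfl | hp
  · simp [dualForm_eq_sum]
  rcases eq_or_ne q 0 with rfl | hq
  · simp [dualForm_eq_sum]
  set β : Fin N → ℕ := fun i => p.degreeOf i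
  set γ : Fin N → ℕ := fun i => q.degreeOf i
  have hpq (i : Fin N) : (p * q).degreeOf i ≤ (β + γ) i := (degreeOf_mul_eq hp hq).le
  have hle : β + γ ≤ α := fun i => (degreeOf_mul_eq hp hq).symm.trans_le (hg i)
  have hsplit : dualForm α (p * q) = dualForm β p * dualForm γ q * dualForm (α - (β + γ)) 1 := by
    rw [← dualForm_mul (α := β) (β := γ) (fun _ => le_rfl) (fun _ => le_rfl),
      ← dualForm_mul hpq (fun i => by simp), mul_one, add_tsub_cancel_of_le hle]
  rw [hsplit, mul_assoc]
  exact dvd_mul_right _ _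

lemma isUnit_of_isUnit_dualForm (hX : ∀ i, ¬ X i ∣ p)
    (hu : IsUnit (dualForm (fun i => p.degreeOf i) p)) : IsUnit p := by
  obtain ⟨c, hc, hpc⟩ := isUnit_iff_eq_C_of_isReduced.1 hu
  have hp : p = monomial (dualExp (fun i => p.degreeOf i) 0) c := by
    rw [← dualForm_monomial, ← C_apply, ← hpc, dualForm_dualForm fun _ => le_rfl]
  have h0 : dualExp (fun i => p.degreeOf i) 0 = 0 := by
    ext i
    by_contra h
    exact hX i (hp ▸ X_dvd_monomial.2 (Or.inr h))
  rw [hp, h0, ← C_apply]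
  exact hc.map C

end

section

variable {k : Type*} [Field k] {n m : ℕ} (f : Fin m → MvPolynomial (Fin n) k)

lemma degreeOf_le_alphaVec (j : Fin m) (i : Fin n) : (f j).degreeOf i ≤ alphaVec f i := by
  rw [degreeOf_eq_sup]
  exact Finset.le_sup (f := fun j => (f j).support.sup fun s => s i) (Finset.mem_univ j)

lemma exists_degreeOf_eq_alphaVec [NeZero m] (i : Fin n) :
    ∃ j, (f j).degreeOf i = alphaVec f i := by
  obtain ⟨j, -, hj⟩ := Finset.exists_mem_eq_sup Finset.univ Finset.univ_nonempty
    fun j => (f j).support.sup fun s => s i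
  exact ⟨j, by rw [degreeOf_eq_sup, alphaVec, hj]⟩

lemma alphaVec_ne_zero_iff {i : Fin n} :
    alphaVec f i ≠ 0 ↔ ∃ j, ∃ s ∈ (f j).support, s i ≠ 0 := by
  simp [alphaVec, ← Nat.pos_iff_ne_zero]

variable {f}

lemma alphaVec_dualTuple (h : ∀ i, ∃ j, ¬ X i ∣ f j) : alphaVec (dualTuple f) = alphaVec f := by
  funext i
  refine le_antisymm (Finset.sup_le fun j _ => ?_) ?_
  · rw [← degreeOf_eq_sup]
    exact degreeOf_dualForm_le i
  · obtain ⟨j, hj⟩ := h i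
    rw [← degreeOf_dualForm_of_not_X_dvd (degreeOf_le_alphaVec f j) hj]
    exact degreeOf_le_alphaVec (dualTuple f) j i

end

theorem dualTuple_involutive_general {k : Type*} [Field k] {n m : ℕ}
    (f : Fin (m + 1) → MvPolynomial (Fin (n + 1)) k)
    (hne : ∀ j, f j ≠ 0)
    (hgcd : ∀ p : MvPolynomial (Fin (n + 1)) k, (∀ j, p ∣ f j) → IsUnit p)
    (hall : ∀ i, ∃ j, ∃ s ∈ (f j).support, s i ≠ 0) :
    (∀ p : MvPolynomial (Fin (n + 1)) k, (∀ j, p ∣ dualTuple f j) → IsUnit p) ∧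
    (∀ i, ∃ j, ∃ s ∈ (dualTuple f j).support, s i ≠ 0) ∧
    dualTuple (dualTuple f) = f := by
  have hbnd := degreeOf_le_alphaVec f
  have hX (i : Fin (n + 1)) : ∃ j, ¬ X i ∣ f j := by
    by_contra! h
    exact (X_prime (i := i)).not_isUnit (hgcd _ h)
  refine ⟨fun p hp => ?_, fun i => ?_, ?_⟩
  · refine isUnit_of_isUnit_dualForm (fun i hXi => ?_) (hgcd _ fun j => ?_)
    · obtain ⟨j, hj⟩ := exists_degreeOf_eq_alphaVec f i
      exact not_X_dvd_dualForm_of_degreeOf_eq (hne j) (hbnd j) hj (hXi.trans (hp j))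
    · simpa only [dualTuple, dualForm_dualForm (hbnd j)] using
        dualForm_degreeOf_dvd_dualForm (fun i => degreeOf_dualForm_le i) (hp j)
  · rw [← alphaVec_ne_zero_iff, alphaVec_dualTuple hX, alphaVec_ne_zero_iff]
    exact hall i
  · funext j
    rw [dualTuple, alphaVec_dualTuple hX]
    exact dualForm_dualForm (hbnd j)

/-- if forms `f_0,…,f_m` of the same degree satisfy the canonical restrictions
(`gcd` equal to `1`, and every variable appears in some `f_j`), then the Newton complementary
dual forms also satisfy the canonical restrictions, and the dual of the dual tuple equals the
original tuple. -/
theorem dualTuple_involutive {k : Type*} [Field k] {n m d : ℕ}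
    (f : Fin (m + 1) → MvPolynomial (Fin (n + 1)) k)
    (hne : ∀ j, f j ≠ 0)
    (hdeg : ∀ j, (f j).IsHomogeneous d)
    (hgcd : ∀ p : MvPolynomial (Fin (n + 1)) k, (∀ j, p ∣ f j) → IsUnit p)
    (hall : ∀ i, ∃ j, ∃ s ∈ (f j).support, s i ≠ 0) :
    (∀ p : MvPolynomial (Fin (n + 1)) k, (∀ j, p ∣ dualTuple f j) → IsUnit p) ∧
    (∀ i, ∃ j, ∃ s ∈ (dualTuple f j).support, s i ≠ 0) ∧
    dualTuple (dualTuple f) = f :=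
  dualTuple_involutive_general f hne hgcd hall
end
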